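/- arXiv:2003.02324 — 4 statements merged into one kernel-verified Lean document; each statement's English description precedes it below -/
import Mathlib

section
/- Let g : ℝⁿ → ℝⁿ be Lipschitz with constant L < 1 and suppose g has a fixed point y* (g(y*) = y*). Let DC : ℝⁿ → ℝⁿ satisfy ‖DC(x) − x‖ ≤ K‖x‖ for all x, and define x_{t+1} = g(DC(x_t)). Set θ = L(1 + K). If L < 1/(1+K) (so θ < 1), then limsup_{t→∞} ‖x_t − y*‖ ≤ L·K·‖y*‖ / (1 − θ). -/
open Filter

theorem compressed_fixed_point_limsup {n : ℕ}
    (g DC : (Fin n → ℝ) → (Fin n → ℝ)) (L K : ℝ) (hK : 0 ≤ K) (hL1 : L < 1)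
    (hg : ∀ u v : Fin n → ℝ, ‖g u - g v‖ ≤ L * ‖u - v‖)
    (ystar : Fin n → ℝ) (hfix : g ystar = ystar)
    (hDC : ∀ u : Fin n → ℝ, ‖DC u - u‖ ≤ K * ‖u‖)
    (x : ℕ → Fin n → ℝ)
    (hx : ∀ t, x (t + 1) = g (DC (x t)))
    (θ : ℝ) (hθ : θ = L * (1 + K))
    (hL : 0 < L) (hLK : L < 1 / (1 + K)) :
    Filter.limsup (fun t => ‖x t - ystar‖) Filter.atTop ≤ L * K * ‖ystar‖ / (1 - θ) := by
  have hK1 : (0:ℝ) < 1 + K := by linarith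
  have hθ0 : 0 ≤ θ := by
    rw [hθ]; positivity
  have hθ1 : θ < 1 := by
    rw [hθ]
    calc L * (1 + K) < (1 / (1 + K)) * (1 + K) := by
          exact mul_lt_mul_of_pos_right hLK hK1
    _ = 1 := by field_simp
  have h1θ : (0:ℝ) < 1 - θ := by linarith
  set c : ℝ := L * K * ‖ystar‖ with hc
  have hc0 : 0 ≤ c := by positivity
  have step : ∀ t, ‖x (t + 1) - ystar‖ ≤ θ * ‖x t - ystar‖ + c := by
    intro t
    have h1 : ‖x (t + 1) - ystar‖ ≤ L * ‖DC (x t) - ystar‖ := by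
      rw [hx t]
      calc ‖g (DC (x t)) - ystar‖ = ‖g (DC (x t)) - g ystar‖ := by rw [hfix]
      _ ≤ L * ‖DC (x t) - ystar‖ := hg _ _
    have h2 : ‖DC (x t) - ystar‖ ≤ ‖DC (x t) - x t‖ + ‖x t - ystar‖ := by
      have := norm_sub_le_norm_sub_add_norm_sub (DC (x t)) (x t) ystar
      linarith
    have h3 : ‖DC (x t) - x t‖ ≤ K * ‖x t‖ := hDC _
    have h4 : ‖x t‖ ≤ ‖x t - ystar‖ + ‖ystar‖ := by
      simpa using norm_add_le (x t - ystar) ystar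
    have h5 : ‖DC (x t) - ystar‖ ≤ (1 + K) * ‖x t - ystar‖ + K * ‖ystar‖ := by
      nlinarith
    calc ‖x (t + 1) - ystar‖ ≤ L * ‖DC (x t) - ystar‖ := h1
    _ ≤ L * ((1 + K) * ‖x t - ystar‖ + K * ‖ystar‖) := by
        exact mul_le_mul_of_nonneg_left h5 hL.le
    _ = θ * ‖x t - ystar‖ + c := by rw [hθ, hc]; ring
  have bound : ∀ t, ‖x t - ystar‖ ≤ θ ^ t * ‖x 0 - ystar‖ + c / (1 - θ) := by
    intro t
    induction t with
    | zero =>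
      simp
      positivity
    | succ t ih =>
      calc ‖x (t + 1) - ystar‖ ≤ θ * ‖x t - ystar‖ + c := step t
      _ ≤ θ * (θ ^ t * ‖x 0 - ystar‖ + c / (1 - θ)) + c := by nlinarith
      _ = θ ^ (t + 1) * ‖x 0 - ystar‖ + (θ * (c / (1 - θ)) + c) := by ring
      _ = θ ^ (t + 1) * ‖x 0 - ystar‖ + c / (1 - θ) := by
          congr 1
          field_simp
          ring
  have htend : Tendsto (fun t : ℕ => θ ^ t * ‖x 0 - ystar‖ + c / (1 - θ)) atTop
      (nhds (c / (1 - θ))) := by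
    have h0 : Tendsto (fun t : ℕ => θ ^ t) atTop (nhds 0) :=
      tendsto_pow_atTop_nhds_zero_of_lt_one hθ0 hθ1
    have := (h0.mul_const ‖x 0 - ystar‖).add_const (c / (1 - θ))
    simpa using this
  have hle := Filter.limsup_le_limsup (f := atTop)
      (u := fun t => ‖x t - ystar‖)
      (v := fun t : ℕ => θ ^ t * ‖x 0 - ystar‖ + c / (1 - θ))
      (Filter.Eventually.of_forall bound)
      (Filter.isCoboundedUnder_le_of_eventually_le atTop (x := 0)
        (Filter.Eventually.of_forall fun t => norm_nonneg _))
      htend.isBoundedUnder_le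
  calc Filter.limsup (fun t => ‖x t - ystar‖) Filter.atTop
      ≤ Filter.limsup (fun t : ℕ => θ ^ t * ‖x 0 - ystar‖ + c / (1 - θ)) atTop := hle
  _ = c / (1 - θ) := htend.limsup_eq
end

section
/- Let g : ℝⁿ → ℝⁿ be Lipschitz with constant L < 1 and fixed point y*, let DC satisfy ‖DC(x) − x‖ ≤ K‖x‖, and set θ = L(1+K). If θ < 1, then for the sequence x_{t+1} = g(DC(x_t)) one has, for every t ≥ 0, ‖x_t − y*‖ ≤ θ^t ‖x_0 − y*‖ + L·K·‖y*‖ · Σ_{j=0}^{t−1} θ^j. -/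
open Finset

theorem compressed_fixed_point_geometric_bound {n : ℕ}
    (g DC : (Fin n → ℝ) → (Fin n → ℝ)) (L K : ℝ) (hK : 0 ≤ K) (hL1 : L < 1)
    (hg : ∀ u v : Fin n → ℝ, ‖g u - g v‖ ≤ L * ‖u - v‖)
    (ystar : Fin n → ℝ) (hfix : g ystar = ystar)
    (hDC : ∀ u : Fin n → ℝ, ‖DC u - u‖ ≤ K * ‖u‖)
    (x : ℕ → Fin n → ℝ)
    (hx : ∀ t, x (t + 1) = g (DC (x t)))
    (θ : ℝ) (hθ : θ = L * (1 + K)) (hθ1 : θ < 1) :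
    ∀ t : ℕ, ‖x t - ystar‖ ≤
      θ ^ t * ‖x 0 - ystar‖ + L * K * ‖ystar‖ * ∑ j ∈ Finset.range t, θ ^ j := by
  rcases le_or_gt 0 L with hL0 | hL0
  · have hθ0 : 0 ≤ θ := by
      rw [hθ]; positivity
    have key : ∀ t, ‖x (t + 1) - ystar‖ ≤ θ * ‖x t - ystar‖ + L * K * ‖ystar‖ := by
      intro t
      calc ‖x (t + 1) - ystar‖ = ‖g (DC (x t)) - g ystar‖ := by rw [hx, hfix]
        _ ≤ L * ‖DC (x t) - ystar‖ := hg _ _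
        _ ≤ L * (K * ‖x t‖ + ‖x t - ystar‖) := by
            apply mul_le_mul_of_nonneg_left _ hL0
            calc ‖DC (x t) - ystar‖ ≤ ‖DC (x t) - x t‖ + ‖x t - ystar‖ :=
                  norm_sub_le_norm_sub_add_norm_sub _ _ _
              _ ≤ K * ‖x t‖ + ‖x t - ystar‖ := by
                  exact add_le_add_left (hDC _) _
        _ ≤ L * (K * (‖x t - ystar‖ + ‖ystar‖) + ‖x t - ystar‖) := by
            apply mul_le_mul_of_nonneg_left _ hL0
            apply add_le_add_left
            apply mul_le_mul_of_nonneg_left _ hK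
            calc ‖x t‖ = ‖x t - ystar + ystar‖ := by ring_nf
              _ ≤ ‖x t - ystar‖ + ‖ystar‖ := norm_add_le _ _
        _ = θ * ‖x t - ystar‖ + L * K * ‖ystar‖ := by rw [hθ]; ring
    intro t
    induction t with
    | zero => simp
    | succ t ih =>
      calc ‖x (t + 1) - ystar‖ ≤ θ * ‖x t - ystar‖ + L * K * ‖ystar‖ := key t
        _ ≤ θ * (θ ^ t * ‖x 0 - ystar‖ + L * K * ‖ystar‖ * ∑ j ∈ Finset.range t, θ ^ j)
              + L * K * ‖ystar‖ := by
            exact add_le_add_left (mul_le_mul_of_nonneg_left ih hθ0) _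
        _ = θ ^ (t + 1) * ‖x 0 - ystar‖
              + L * K * ‖ystar‖ * (θ * ∑ j ∈ Finset.range t, θ ^ j + 1) := by ring
        _ = θ ^ (t + 1) * ‖x 0 - ystar‖
              + L * K * ‖ystar‖ * ∑ j ∈ Finset.range (t + 1), θ ^ j := by
            rw [geom_sum_succ]
  · -- L < 0: then all points are equal
    have hall : ∀ u v : Fin n → ℝ, u = v := by
      intro u v
      have h1 : (0 : ℝ) ≤ L * ‖u - v‖ := le_trans (norm_nonneg _) (hg u v)
      have h2 : ‖u - v‖ ≤ 0 := nonpos_of_mul_nonneg_right h1 hL0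
      have := le_antisymm h2 (norm_nonneg _)
      have := norm_sub_eq_zero_iff.mp this
      exact this
    intro t
    have h1 : x t = ystar := hall _ _
    have h2 : ystar = 0 := hall _ _
    have h3 : x 0 = 0 := hall _ _
    simp [h1, h2, h3]
end

section
/- Let 0 < L < 1, K ≥ 0, C = K/(1−L), and t ∈ ℕ with C < min(1, L^{t+1}). If m ∈ ℕ satisfies m ≥ log_L((L^{t+1} − C)/(1 − C)) − (t+1), then L^{t+m+1} + K·Σ_{j=0}^{t+m} L^{t+m−j} ≤ L^{t+1}. -/
open Finset

theorem extra_iterations_inequality (L K : ℝ) (t m : ℕ)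
    (hL0 : 0 < L) (hL1 : L < 1) (hK : 0 ≤ K)
    (C : ℝ) (hC : C = K / (1 - L))
    (hClt : C < min 1 (L ^ (t + 1)))
    (hm : (m : ℝ) ≥ Real.logb L ((L ^ (t + 1) - C) / (1 - C)) - (t + 1)) :
    L ^ (t + m + 1) + K * ∑ j ∈ Finset.range (t + m + 1), L ^ (t + m - j) ≤ L ^ (t + 1) := by
  have hC1 : C < 1 := lt_of_lt_of_le hClt (min_le_left _ _)
  have hCt : C < L ^ (t + 1) := lt_of_lt_of_le hClt (min_le_right _ _)
  have hLne : L ≠ 1 := ne_of_lt hL1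
  have hL1sub : (0:ℝ) < 1 - L := by linarith
  have hsum : ∑ j ∈ Finset.range (t + m + 1), L ^ (t + m - j)
      = ∑ j ∈ Finset.range (t + m + 1), L ^ j := by
    rw [← Finset.sum_range_reflect]
    refine Finset.sum_congr rfl fun j hj => ?_
    simp only [Finset.mem_range] at hj
    congr 1
    omega
  have hgeom : ∑ j ∈ Finset.range (t + m + 1), L ^ j = (1 - L ^ (t + m + 1)) / (1 - L) := by
    rw [geom_sum_eq hLne]
    rw [div_eq_div_iff (by linarith) (by linarith)]
    ring
  have hratio : (0:ℝ) < (L ^ (t + 1) - C) / (1 - C) :=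
    div_pos (by linarith) (by linarith)
  have hpow : L ^ (t + m + 1) ≤ (L ^ (t + 1) - C) / (1 - C) := by
    have h1 : L ^ ((t + m + 1 : ℕ) : ℝ)
        ≤ L ^ (Real.logb L ((L ^ (t + 1) - C) / (1 - C))) := by
      apply Real.rpow_le_rpow_of_exponent_ge hL0 hL1.le
      push_cast
      linarith
    rw [Real.rpow_logb hL0 hLne hratio, Real.rpow_natCast] at h1
    exact h1
  have hKC : K = C * (1 - L) := by
    rw [hC]; field_simp
  rw [hsum, hgeom, hKC]
  have h2 : (1 - C) * L ^ (t + m + 1) ≤ L ^ (t + 1) - C := by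
    rw [← le_div_iff₀' (by linarith)]
    exact hpow
  have h3 : C * (1 - L) * ((1 - L ^ (t + m + 1)) / (1 - L)) = C * (1 - L ^ (t + m + 1)) := by
    field_simp
  rw [h3]
  linarith
end

section
/- Consider the stationary iteration M x_{t+1} = N(x_t + δx_t) + b + ζ_t with G = M^{-1}N, x* the exact fixed point (Mx* = Nx* + b), ‖G‖∞ = σ < 1, ‖δx_j‖∞ ≤ K‖x_j‖∞ ≤ K γ ‖x*‖∞, and ‖ζ_j‖∞ ≤ Z for all j. Then for all t, ‖x_{t+1} − x*‖∞ ≤ σ^{t+1}‖x_0 − x*‖∞ + (Z‖M^{-1}‖∞ + Kγσ‖x*‖∞) · (1 − σ^{t+1})/(1 − σ). -/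
open Finset

theorem stationary_iteration_forward_error_bound {n : ℕ}
    (G Minv : (Fin n → ℝ) →L[ℝ] (Fin n → ℝ)) (b : Fin n → ℝ)
    (x : ℕ → Fin n → ℝ) (δx ζ : ℕ → Fin n → ℝ) (xstar : Fin n → ℝ)
    (σ K γ Z : ℝ)
    (hrec : ∀ t, x (t + 1) = G (x t + δx t) + Minv (b + ζ t))
    (hfix : xstar = G xstar + Minv b)
    (hσ : σ = ‖G‖) (hσ1 : σ < 1)
    (hδ : ∀ j, ‖δx j‖ ≤ K * ‖x j‖ ∧ K * ‖x j‖ ≤ K * γ * ‖xstar‖)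
    (hζ : ∀ j, ‖ζ j‖ ≤ Z) :
    ∀ t : ℕ, ‖x (t + 1) - xstar‖ ≤
      σ ^ (t + 1) * ‖x 0 - xstar‖ +
        (Z * ‖Minv‖ + K * γ * σ * ‖xstar‖) * ((1 - σ ^ (t + 1)) / (1 - σ)) := by
  have hσ0 : (0:ℝ) ≤ σ := hσ ▸ norm_nonneg _
  have h1σ : (0:ℝ) < 1 - σ := by linarith
  set C := Z * ‖Minv‖ + K * γ * σ * ‖xstar‖ with hC
  have key : ∀ t, ‖x (t+1) - xstar‖ ≤ σ * ‖x t - xstar‖ + C := by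
    intro t
    have he : x (t+1) - xstar = G (x t - xstar) + G (δx t) + Minv (ζ t) := by
      rw [hrec t]
      nth_rewrite 1 [hfix]
      simp only [map_add, map_sub]
      abel
    have h1 : ‖G (x t - xstar)‖ ≤ σ * ‖x t - xstar‖ := by
      rw [hσ]; exact G.le_opNorm _
    have h2 : ‖G (δx t)‖ ≤ K * γ * σ * ‖xstar‖ := by
      have := G.le_opNorm (δx t)
      have hd : ‖δx t‖ ≤ K * γ * ‖xstar‖ := (hδ t).1.trans (hδ t).2
      have : ‖G (δx t)‖ ≤ σ * (K * γ * ‖xstar‖) := by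
        calc ‖G (δx t)‖ ≤ ‖G‖ * ‖δx t‖ := G.le_opNorm _
          _ ≤ σ * (K * γ * ‖xstar‖) := by
              rw [← hσ]; exact mul_le_mul_of_nonneg_left hd hσ0
      linarith [this]
    have h3 : ‖Minv (ζ t)‖ ≤ Z * ‖Minv‖ := by
      calc ‖Minv (ζ t)‖ ≤ ‖Minv‖ * ‖ζ t‖ := Minv.le_opNorm _
        _ ≤ ‖Minv‖ * Z := mul_le_mul_of_nonneg_left (hζ t) (norm_nonneg _)
        _ = Z * ‖Minv‖ := mul_comm _ _
    calc ‖x (t+1) - xstar‖ = ‖G (x t - xstar) + G (δx t) + Minv (ζ t)‖ := by rw [he]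
      _ ≤ ‖G (x t - xstar)‖ + ‖G (δx t)‖ + ‖Minv (ζ t)‖ := norm_add₃_le
      _ ≤ σ * ‖x t - xstar‖ + C := by rw [hC]; linarith
  intro t
  induction t with
  | zero =>
    have h := key 0
    have hdiv : (1 - σ ^ (0+1)) / (1 - σ) = 1 := by
      rw [pow_one]; exact div_self h1σ.ne'
    rw [hdiv, pow_one, mul_one]
    exact h
  | succ t ih =>
    have hk := key (t+1)
    have hm : σ * ‖x (t+1) - xstar‖ ≤
        σ * (σ ^ (t+1) * ‖x 0 - xstar‖ + C * ((1 - σ ^ (t+1)) / (1 - σ))) :=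
      mul_le_mul_of_nonneg_left ih hσ0
    have halg : σ * (σ ^ (t+1) * ‖x 0 - xstar‖ + C * ((1 - σ ^ (t+1)) / (1 - σ))) + C =
        σ ^ (t+1+1) * ‖x 0 - xstar‖ + C * ((1 - σ ^ (t+1+1)) / (1 - σ)) := by
      field_simp
      ring
    linarith
end
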